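/- Let q and r be nonzero complex numbers. There exists a 2×2 unitary matrix U = (u_{ij}) such that the algebra automorphism Φ_U of ℂ⟨x₁,x₂⟩ determined by Φ_U(x_i) = u_{i1}x₁ + u_{i2}x₂ maps the two-sided ideal generated by x₁x₂ − q x₂x₁ onto the two-sided ideal generated by x₁x₂ − r x₂x₁, if and only if r = q or r = q^{-1}. -/

import Mathlib

noncomputable section

/-- The free (noncommutative polynomial) algebra `ℂ⟨x₁,x₂⟩`. -/
abbrev FreeAlg2 : Type := MonoidAlgebra ℂ (FreeMonoid (Fin 2))

/-- The generator `x_i` of `ℂ⟨x₁,x₂⟩`. -/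
def Xg (i : Fin 2) : FreeAlg2 :=
  MonoidAlgebra.of ℂ (FreeMonoid (Fin 2)) (FreeMonoid.of i)

/-- Evaluation `p ↦ p(T)`. -/
def evalTuple {A : Type*} [Semiring A] [Algebra ℂ A] (T : Fin 2 → A) :
    FreeAlg2 →ₐ[ℂ] A :=
  MonoidAlgebra.lift ℂ A (FreeMonoid (Fin 2)) (FreeMonoid.lift T)

/-- The unitary change of variables `Φ_U` determined by `Φ_U(x_i) = Σ_j u_{ij} x_j`. -/
def PhiU (U : Matrix (Fin 2) (Fin 2) ℂ) : FreeAlg2 →ₐ[ℂ] FreeAlg2 :=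
  evalTuple (fun i => ∑ j : Fin 2, U i j • Xg j)


/-!
`Φ_U` sends `x₁x₂ − q x₂x₁` to a quadratic element `∑ c_ij x_i x_j`. On degree two, the ideal
generated by `x₁x₂ − r x₂x₁` is annihilated by every functional `c ↦ ∑ c_ij α_i β_j` with
`α₁β₂ = r α₂β₁`, since such a functional is read off from the nilpotent representation
`x_i ↦ α_i E₁₂ + β_i E₂₃` by `3 × 3` matrices. Three such functionals give
`(1 − q) u₁₁u₂₁ = (1 − q) u₁₂u₂₂ = 0` and `(r − q) u₁₁u₂₂ + (1 − rq) u₁₂u₂₁ = 0`, and as `U` is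
invertible this forces `r = q` or `rq = 1`. Conversely, the identity and the flip `x₁ ↔ x₂`,
which sends `x₁x₂ − q x₂x₁` to `−q (x₁x₂ − q⁻¹ x₂x₁)`, realise the two cases.
-/

open TwoSidedIdeal

lemma evalTuple_Xg {A : Type*} [Semiring A] [Algebra ℂ A] (T : Fin 2 → A) (i : Fin 2) :
    evalTuple T (Xg i) = T i := by
  simp [evalTuple, Xg]

lemma FreeAlg2.algHom_ext {A : Type*} [Semiring A] [Algebra ℂ A] {f g : FreeAlg2 →ₐ[ℂ] A}
    (h : ∀ i, f (Xg i) = g (Xg i)) : f = g :=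
  MonoidAlgebra.algHom_ext' (FreeMonoid.hom_eq h) (Subsingleton.elim _ _)

lemma PhiU_Xg (U : Matrix (Fin 2) (Fin 2) ℂ) (i : Fin 2) :
    PhiU U (Xg i) = ∑ j, U i j • Xg j :=
  evalTuple_Xg _ i

def relator (q : ℂ) : FreeAlg2 :=
  Xg 0 * Xg 1 - q • (Xg 1 * Xg 0)

lemma PhiU_relator (U : Matrix (Fin 2) (Fin 2) ℂ) (q : ℂ) :
    PhiU U (relator q) =
      ∑ i, ∑ j, (U 0 i * U 1 j - q * (U 1 i * U 0 j)) • (Xg i * Xg j) := by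
  simp only [relator, map_sub, map_smul, map_mul, PhiU_Xg, Finset.sum_mul_sum, Finset.smul_sum,
    smul_mul_smul, ← Finset.sum_sub_distrib, sub_smul, smul_smul]

lemma evalTuple_eq_zero_of_mem_span {A : Type*} [Ring A] [Algebra ℂ A] {T : Fin 2 → A} {r : ℂ}
    (hT : T 0 * T 1 = r • (T 1 * T 0)) {p : FreeAlg2} (hp : p ∈ span {relator r}) :
    evalTuple T p = 0 := by
  have : span {relator r} ≤ ker (evalTuple T) := by
    rw [span_le, Set.singleton_subset_iff, SetLike.mem_coe, mem_ker]
    simp [relator, evalTuple_Xg, hT]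
  exact (mem_ker _).mp (this hp)

def ladder (α β : Fin 2 → ℂ) (i : Fin 2) : Matrix (Fin 3) (Fin 3) ℂ :=
  !![0, α i, 0; 0, 0, β i; 0, 0, 0]

lemma ladder_mul_ladder (α β : Fin 2 → ℂ) (i j : Fin 2) :
    ladder α β i * ladder α β j = !![0, 0, α i * β j; 0, 0, 0; 0, 0, 0] := by
  rw [ladder, ladder, Matrix.mul_fin_three]
  simp

lemma sum_mul_eq_zero_of_mem_span {r : ℂ} {α β : Fin 2 → ℂ} (hαβ : α 0 * β 1 = r * (α 1 * β 0))
    {c : Fin 2 → Fin 2 → ℂ} (hc : ∑ i, ∑ j, c i j • (Xg i * Xg j) ∈ span {relator r}) :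
    ∑ i, ∑ j, c i j * (α i * β j) = 0 := by
  have hT : ladder α β 0 * ladder α β 1 = r • (ladder α β 1 * ladder α β 0) := by
    simp [ladder_mul_ladder, hαβ]
  have := congrFun (congrFun (evalTuple_eq_zero_of_mem_span hT hc) 0) 2
  simpa [evalTuple_Xg, ladder_mul_ladder, Matrix.sum_apply] using this

lemma relator_coeffs_of_PhiU_mem {U : Matrix (Fin 2) (Fin 2) ℂ} {q r : ℂ}
    (h : PhiU U (relator q) ∈ span {relator r}) :
    (1 - q) * (U 0 0 * U 1 0) = 0 ∧ (1 - q) * (U 0 1 * U 1 1) = 0 ∧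
      (r - q) * (U 0 0 * U 1 1) + (1 - r * q) * (U 0 1 * U 1 0) = 0 := by
  rw [PhiU_relator] at h
  have h₀₀ := sum_mul_eq_zero_of_mem_span (α := ![1, 0]) (β := ![1, 0]) (by simp) h
  have h₁₁ := sum_mul_eq_zero_of_mem_span (α := ![0, 1]) (β := ![0, 1]) (by simp) h
  have hmix := sum_mul_eq_zero_of_mem_span (α := ![1, 1]) (β := ![1, r]) (by simp) h
  simp only [Fin.sum_univ_two, Matrix.cons_val_zero, Matrix.cons_val_one] at h₀₀ h₁₁ hmix
  exact ⟨by linear_combination h₀₀, by linear_combination h₁₁,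
    by linear_combination hmix - h₀₀ - r * h₁₁⟩

lemma eq_or_mul_eq_one_of_det_ne_zero {K : Type*} [Field K] {q r a b c d : K}
    (hdet : a * d - b * c ≠ 0) (h₁ : (1 - q) * (a * c) = 0) (h₂ : (1 - q) * (b * d) = 0)
    (h : (r - q) * (a * d) + (1 - r * q) * (b * c) = 0) : r = q ∨ r * q = 1 := by
  by_cases hq : q = 1
  · subst hq
    left
    have : (r - 1) * (a * d - b * c) = 0 := by linear_combination h
    simpa [hdet, sub_eq_zero] using this
  · have hq' : 1 - q ≠ 0 := sub_ne_zero.mpr (Ne.symm hq)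
    simp only [mul_eq_zero, hq', false_or] at h₁ h₂
    rcases h₁ with rfl | rfl
    · right; grind
    · left; grind

lemma TwoSidedIdeal.image_span_singleton_of_involutive {R F : Type*} [Ring R] [FunLike F R R]
    [RingHomClass F R R] {σ : F} (hσ : Function.Involutive σ) {x y : R}
    (hx : σ x ∈ span {y}) (hy : σ y ∈ span {x}) :
    σ '' (span {x} : Set R) = span {y} := by
  have span_le_comap {x y : R} (h : σ x ∈ span {y}) : span {x} ≤ comap σ (span {y}) :=
    span_le.mpr (Set.singleton_subset_iff.mpr ((mem_comap σ).mpr h))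
  rw [hσ.image_eq_preimage_symm]
  ext z
  refine ⟨fun hz => ?_, fun hz => (mem_comap σ).mp (span_le_comap hy hz)⟩
  rw [← hσ z]
  exact (mem_comap σ).mp (span_le_comap hx hz)

lemma PhiU_one : PhiU 1 = AlgHom.id ℂ FreeAlg2 :=
  FreeAlg2.algHom_ext fun i => by fin_cases i <;> simp [PhiU_Xg]

lemma swap_mem_unitaryGroup : !![0, 1; 1, 0] ∈ Matrix.unitaryGroup (Fin 2) ℂ := by
  rw [Matrix.mem_unitaryGroup_iff']
  ext i j
  fin_cases i <;> fin_cases j <;> simp [Matrix.mul_apply]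

lemma PhiU_swap_Xg (i : Fin 2) : PhiU !![0, 1; 1, 0] (Xg i) = Xg (1 - i) := by
  fin_cases i <;> simp [PhiU_Xg]

lemma PhiU_swap_involutive : Function.Involutive (PhiU !![0, 1; 1, 0]) := by
  have : (PhiU !![0, 1; 1, 0]).comp (PhiU !![0, 1; 1, 0]) = AlgHom.id ℂ FreeAlg2 :=
    FreeAlg2.algHom_ext fun i => by simp [PhiU_swap_Xg]
  exact fun p => DFunLike.congr_fun this p

lemma PhiU_swap_relator_mem {q : ℂ} (hq : q ≠ 0) :
    PhiU !![0, 1; 1, 0] (relator q) ∈ span {relator q⁻¹} := by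
  have : PhiU !![0, 1; 1, 0] (relator q) = algebraMap ℂ FreeAlg2 (-q) * relator q⁻¹ := by
    rw [← Algebra.smul_def, relator, relator, smul_sub, smul_smul, neg_mul, mul_inv_cancel₀ hq]
    simp [PhiU_swap_Xg]
    module
  rw [this]
  exact mul_mem_left _ _ _ (subset_span rfl)

theorem stmt13_general (q r : ℂ) :
    (∃ U ∈ Matrix.unitaryGroup (Fin 2) ℂ,
      ⇑(PhiU U) ''
          ((TwoSidedIdeal.span {Xg 0 * Xg 1 - q • (Xg 1 * Xg 0)} :
            TwoSidedIdeal FreeAlg2) : Set FreeAlg2) =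
        ((TwoSidedIdeal.span {Xg 0 * Xg 1 - r • (Xg 1 * Xg 0)} :
          TwoSidedIdeal FreeAlg2) : Set FreeAlg2)) ↔
    (r = q ∨ r = q⁻¹) := by
  constructor
  · rintro ⟨U, hU, himg⟩
    have hmem : PhiU U (relator q) ∈ span {relator r} := by
      rw [← SetLike.mem_coe, relator, relator, ← himg]
      exact Set.mem_image_of_mem _ (subset_span rfl)
    have hdet : U 0 0 * U 1 1 - U 0 1 * U 1 0 ≠ 0 := by
      rw [← Matrix.det_fin_two]
      exact (Matrix.UnitaryGroup.det_isUnit ⟨U, hU⟩).ne_zero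
    obtain ⟨h₁, h₂, h⟩ := relator_coeffs_of_PhiU_mem hmem
    exact (eq_or_mul_eq_one_of_det_ne_zero hdet h₁ h₂ h).imp_right eq_inv_of_mul_eq_one_left
  · intro hr
    by_cases hrq : r = q
    · exact ⟨1, one_mem _, by simp [PhiU_one, hrq]⟩
    obtain rfl : r = q⁻¹ := hr.resolve_left hrq
    -- `0⁻¹ = 0`, so `r = q⁻¹ ≠ q` rules out `q = 0`.
    have hq : q ≠ 0 := by rintro rfl; simp at hrq
    refine ⟨_, swap_mem_unitaryGroup,
      image_span_singleton_of_involutive PhiU_swap_involutive (PhiU_swap_relator_mem hq) ?_⟩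
    have hy := PhiU_swap_relator_mem (inv_ne_zero hq)
    rwa [inv_inv] at hy

/-- **Classification for `d = 2`**: a unitary change of variables of `ℂ⟨x₁,x₂⟩` maps the
ideal generated by `x₁x₂ − q x₂x₁` onto the ideal generated by `x₁x₂ − r x₂x₁` if and only
if `r = q` or `r = q⁻¹`. -/
theorem stmt13 (q r : ℂ) (hq : q ≠ 0) (hr : r ≠ 0) :
    (∃ U ∈ Matrix.unitaryGroup (Fin 2) ℂ,
      ⇑(PhiU U) ''
          ((TwoSidedIdeal.span {Xg 0 * Xg 1 - q • (Xg 1 * Xg 0)} :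
            TwoSidedIdeal FreeAlg2) : Set FreeAlg2) =
        ((TwoSidedIdeal.span {Xg 0 * Xg 1 - r • (Xg 1 * Xg 0)} :
          TwoSidedIdeal FreeAlg2) : Set FreeAlg2)) ↔
    (r = q ∨ r = q⁻¹) :=
  stmt13_general q r
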